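/- arXiv:1611.08143 — 2 statements merged into one kernel-verified Lean document; each statement's English description precedes it below -/
import Mathlib

section
/- Let 𝕋 be a collection of trees on ω^{<ω} satisfying: (1) ω^{<ω} ∈ 𝕋; (2) if T ∈ 𝕋 and s ∈ T then T_s = {t ∈ T : s ⊆ t or t ⊆ s} ∈ 𝕋; and (5) every T ∈ 𝕋 contains 𝔠 many trees T_α ∈ 𝕋 (α < 𝔠) with T_α ⊆ T and [T_α] ∩ [T_β] = ∅ for α ≠ β. If 𝕋 has the disjoint maximal antichain property, then cof(t⁰) > 𝔠. -/
/-- The restriction `x↾n` of a sequence `x ∈ ω^ω` to its first `n` values, as a finite sequence. -/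
def seqRestrict (x : ℕ → ℕ) (n : ℕ) : List ℕ := List.ofFn fun i : Fin n => x i

/-- A tree on `ω`: a nonempty set of finite sequences closed under initial segments. -/
def IsSeqTree (T : Set (List ℕ)) : Prop :=
  T.Nonempty ∧ ∀ s ∈ T, ∀ t : List ℕ, t <+: s → t ∈ T

/-- `[T]`, the set of branches of a tree `T ⊆ ω^{<ω}`. -/
def branches (T : Set (List ℕ)) : Set (ℕ → ℕ) := {x | ∀ n : ℕ, seqRestrict x n ∈ T}

/-- `S` and `T` are compatible in `𝕋` (ordered by inclusion) if they have a common extension. -/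
def Compat (𝕋 : Set (Set (List ℕ))) (S T : Set (List ℕ)) : Prop :=
  ∃ R ∈ 𝕋, R ⊆ S ∧ R ⊆ T

/-- `𝕋` has the disjoint maximal antichain property: there is a maximal antichain
`(T_α : α < 𝔠)` in `𝕋` with `[T_α] ∩ [T_β] = ∅` for `α ≠ β`. -/
def DisjointMaxAntichainProp (𝕋 : Set (Set (List ℕ))) : Prop :=
  ∃ (ι : Type) (Tfam : ι → Set (List ℕ)),
    Cardinal.mk ι = Cardinal.continuum ∧
    (∀ a : ι, Tfam a ∈ 𝕋) ∧
    (∀ a b : ι, a ≠ b → ¬ Compat 𝕋 (Tfam a) (Tfam b)) ∧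
    (∀ T ∈ 𝕋, ∃ a : ι, Compat 𝕋 T (Tfam a)) ∧
    (∀ a b : ι, a ≠ b → branches (Tfam a) ∩ branches (Tfam b) = ∅)

/-- The tree ideal `t⁰` associated with `𝕋`: all `X ⊆ ω^ω` such that below every `T ∈ 𝕋`
there is `S ∈ 𝕋` with `X ∩ [S] = ∅`. -/
def treeIdeal (𝕋 : Set (Set (List ℕ))) : Set (Set (ℕ → ℕ)) :=
  {X | ∀ T ∈ 𝕋, ∃ S ∈ 𝕋, S ⊆ T ∧ X ∩ branches S = ∅}

/-- The cofinality `cof(I)` of an ideal `I`: the least cardinality of a family `J ⊆ I`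
such that every member of `I` is contained in a member of `J`. -/
noncomputable def idealCof (I : Set (Set (ℕ → ℕ))) : Cardinal :=
  sInf {c : Cardinal | ∃ J ⊆ I, Cardinal.mk J = c ∧ ∀ X ∈ I, ∃ Y ∈ J, X ⊆ Y}

/-!
Let `(T_a)` be a disjoint maximal antichain. Only countably many `T_a` lie above a branchless
member of `𝕋`: such a member has a leaf `u`, the chain of initial segments of `u` then belongs to
`𝕋`, and distinct antichain members cannot share it. Given `J ⊆ t⁰` with `|J| ≤ 𝔠`, send `J`
injectively to the remaining indices and pick `x_Y ∈ [T_{a(Y)}] \ Y`. The set `{x_Y}` meets each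
`[T_a]` in at most one point, so below every condition one of two disjoint pieces avoids it: it
lies in `t⁰` but in no member of `J`.
-/

open Cardinal Function Set

lemma IsSeqTree.nil_mem {T : Set (List ℕ)} (hT : IsSeqTree T) : [] ∈ T :=
  hT.1.elim fun s hs => hT.2 s hs [] List.nil_prefix

lemma IsSeqTree.mem_of_prefix {T : Set (List ℕ)} (hT : IsSeqTree T) {s t : List ℕ}
    (hts : t <+: s) (hs : s ∈ T) : t ∈ T :=
  hT.2 s hs t hts

lemma seqRestrict_succ (x : ℕ → ℕ) (n : ℕ) :
    seqRestrict x (n + 1) = seqRestrict x n ++ [x n] := by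
  simp only [seqRestrict, List.ofFn_succ', List.concat_eq_append, Fin.val_castSucc, Fin.val_last]

lemma branches_mono {S T : Set (List ℕ)} (h : S ⊆ T) : branches S ⊆ branches T :=
  fun _ hx n => h (hx n)

lemma IsSeqTree.branches_nonempty {T : Set (List ℕ)} (hT : IsSeqTree T)
    (hext : ∀ u ∈ T, ∃ k, u ++ [k] ∈ T) : (branches T).Nonempty := by
  choose next hnext using fun u : T => hext u.1 u.2
  let node : ℕ → T := fun n => Nat.rec ⟨[], hT.nil_mem⟩ (fun _ u => ⟨u.1 ++ [next u], hnext u⟩) n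
  refine ⟨fun n => next (node n), fun n => ?_⟩
  have hrestrict : seqRestrict (fun n => next (node n)) n = (node n).1 := by
    induction n with
    | zero => rfl
    | succ n ih => rw [seqRestrict_succ, ih]
  exact hrestrict ▸ (node n).2

lemma IsSeqTree.exists_leaf_of_branches_eq_empty {T : Set (List ℕ)} (hT : IsSeqTree T)
    (hbr : branches T = ∅) : ∃ u ∈ T, ∀ k, u ++ [k] ∉ T := by
  by_contra! hext
  exact (hT.branches_nonempty hext).ne_empty hbr

lemma IsSeqTree.eq_of_leaf_prefix {T : Set (List ℕ)} (hT : IsSeqTree T) {u t : List ℕ}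
    (hleaf : ∀ k, u ++ [k] ∉ T) (ht : t ∈ T) (hut : u <+: t) : t = u := by
  obtain ⟨r, rfl⟩ := hut
  cases r with
  | nil => simp
  | cons k r => exact absurd (hT.mem_of_prefix (by simp) ht) (hleaf k)

def BranchlessBelow (𝕋 : Set (Set (List ℕ))) (T : Set (List ℕ)) : Prop :=
  ∃ B ∈ 𝕋, B ⊆ T ∧ branches B = ∅

section TreeFamily

variable {𝕋 : Set (Set (List ℕ))}

lemma BranchlessBelow.exists_initialSegments_mem (htree : ∀ T ∈ 𝕋, IsSeqTree T)
    (hrestrict : ∀ T ∈ 𝕋, ∀ s ∈ T, {t ∈ T | s <+: t ∨ t <+: s} ∈ 𝕋) {T : Set (List ℕ)}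
    (hT : BranchlessBelow 𝕋 T) : ∃ u : List ℕ, {t | t <+: u} ∈ 𝕋 ∧ {t | t <+: u} ⊆ T := by
  obtain ⟨B, hB, hBT, hbr⟩ := hT
  have hBtree := htree B hB
  obtain ⟨u, huB, hleaf⟩ := hBtree.exists_leaf_of_branches_eq_empty hbr
  have hchain : {t ∈ B | u <+: t ∨ t <+: u} = {t | t <+: u} := by
    ext t
    refine ⟨?_, fun htu => ⟨hBtree.mem_of_prefix htu huB, Or.inr htu⟩⟩
    rintro ⟨htB, hut | htu⟩
    · exact (hBtree.eq_of_leaf_prefix hleaf htB hut).symm ▸ List.prefix_refl u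
    · exact htu
  exact ⟨u, hchain ▸ hrestrict B hB u huB,
    fun t htu => hBT (hBtree.mem_of_prefix htu huB)⟩

lemma countable_setOf_branchlessBelow (htree : ∀ T ∈ 𝕋, IsSeqTree T)
    (hrestrict : ∀ T ∈ 𝕋, ∀ s ∈ T, {t ∈ T | s <+: t ∨ t <+: s} ∈ 𝕋)
    {ι : Type*} {Tfam : ι → Set (List ℕ)}
    (hanti : ∀ a b : ι, a ≠ b → ¬ Compat 𝕋 (Tfam a) (Tfam b)) :
    {a | BranchlessBelow 𝕋 (Tfam a)}.Countable := by
  choose u hu𝕋 huT using fun a : {a | BranchlessBelow 𝕋 (Tfam a)} =>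
    a.2.exists_initialSegments_mem htree hrestrict
  have hinj : Injective u := fun a b hab => Subtype.ext <| by_contra fun hne =>
    hanti a b hne ⟨_, hu𝕋 a, huT a, hab ▸ huT b⟩
  exact countable_coe_iff.mp hinj.countable

lemma mk_setOf_not_branchlessBelow (htree : ∀ T ∈ 𝕋, IsSeqTree T)
    (hrestrict : ∀ T ∈ 𝕋, ∀ s ∈ T, {t ∈ T | s <+: t ∨ t <+: s} ∈ 𝕋)
    {ι : Type} {Tfam : ι → Set (List ℕ)} (hι : #ι = 𝔠)
    (hanti : ∀ a b : ι, a ≠ b → ¬ Compat 𝕋 (Tfam a) (Tfam b)) :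
    #{a | ¬ BranchlessBelow 𝕋 (Tfam a)} = 𝔠 := by
  have : Infinite ι := infinite_iff.mpr (hι ▸ aleph0_le_continuum)
  rw [← hι]
  refine mk_compl_of_infinite {a | BranchlessBelow 𝕋 (Tfam a)} ?_
  calc #{a | BranchlessBelow 𝕋 (Tfam a)}
      ≤ ℵ₀ := le_aleph0_iff_set_countable.mpr (countable_setOf_branchlessBelow htree hrestrict hanti)
    _ < #ι := hι ▸ aleph0_lt_continuum

lemma exists_mem_branches_not_mem_of_mem_treeIdeal {Y : Set (ℕ → ℕ)} (hY : Y ∈ treeIdeal 𝕋)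
    {T : Set (List ℕ)} (hT : T ∈ 𝕋) (hgood : ¬ BranchlessBelow 𝕋 T) :
    ∃ x ∈ branches T, x ∉ Y := by
  obtain ⟨S, hS, hST, hYS⟩ := hY T hT
  obtain ⟨x, hx⟩ := nonempty_iff_ne_empty.mpr fun hbr => hgood ⟨S, hS, hST, hbr⟩
  exact ⟨x, branches_mono hST hx, fun hxY => (hYS ▸ ⟨hxY, hx⟩ : x ∈ (∅ : Set (ℕ → ℕ)))⟩

lemma exists_disjoint_pair_of_split {T : Set (List ℕ)}
    (hsplit : ∃ (ι : Type) (Tfam : ι → Set (List ℕ)), #ι = 𝔠 ∧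
      (∀ a : ι, Tfam a ∈ 𝕋 ∧ Tfam a ⊆ T) ∧
      (∀ a b : ι, a ≠ b → branches (Tfam a) ∩ branches (Tfam b) = ∅)) :
    ∃ P ∈ 𝕋, ∃ Q ∈ 𝕋, P ⊆ T ∧ Q ⊆ T ∧ branches P ∩ branches Q = ∅ := by
  obtain ⟨ι, Tfam, hι, hmem, hdisj⟩ := hsplit
  have : Nontrivial ι := by
    rw [← one_lt_iff_nontrivial, hι]
    exact one_lt_aleph0.trans aleph0_lt_continuum
  obtain ⟨a, b, hab⟩ := exists_pair_ne ι
  exact ⟨Tfam a, (hmem a).1, Tfam b, (hmem b).1, (hmem a).2, (hmem b).2, hdisj a b hab⟩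

lemma exists_subset_inter_branches_eq_empty_of_subsingleton
    (hsplit : ∀ T ∈ 𝕋, ∃ P ∈ 𝕋, ∃ Q ∈ 𝕋, P ⊆ T ∧ Q ⊆ T ∧ branches P ∩ branches Q = ∅)
    {R : Set (List ℕ)} (hR : R ∈ 𝕋) {X : Set (ℕ → ℕ)} (hX : (X ∩ branches R).Subsingleton) :
    ∃ S ∈ 𝕋, S ⊆ R ∧ X ∩ branches S = ∅ := by
  obtain ⟨P, hP, Q, hQ, hPR, hQR, hPQ⟩ := hsplit R hR
  by_cases hXP : X ∩ branches P = ∅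
  · exact ⟨P, hP, hPR, hXP⟩
  refine ⟨Q, hQ, hQR, eq_empty_of_forall_notMem fun w ⟨hwX, hwQ⟩ => ?_⟩
  obtain ⟨z, hzX, hzP⟩ := nonempty_iff_ne_empty.mpr hXP
  have hzw : z = w :=
    hX ⟨hzX, branches_mono hPR hzP⟩ ⟨hwX, branches_mono hQR hwQ⟩
  exact (hPQ ▸ ⟨hzP, hzw ▸ hwQ⟩ : z ∈ (∅ : Set (ℕ → ℕ)))

lemma mem_treeIdeal_of_subsingleton_inter
    (hsplit : ∀ T ∈ 𝕋, ∃ P ∈ 𝕋, ∃ Q ∈ 𝕋, P ⊆ T ∧ Q ⊆ T ∧ branches P ∩ branches Q = ∅)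
    {ι : Type*} {Tfam : ι → Set (List ℕ)} (hmax : ∀ T ∈ 𝕋, ∃ a : ι, Compat 𝕋 T (Tfam a))
    {X : Set (ℕ → ℕ)} (hX : ∀ a, (X ∩ branches (Tfam a)).Subsingleton) :
    X ∈ treeIdeal 𝕋 := by
  intro T hT
  obtain ⟨a, R, hR, hRT, hRa⟩ := hmax T hT
  obtain ⟨S, hS, hSR, hXS⟩ := exists_subset_inter_branches_eq_empty_of_subsingleton hsplit hR
    ((hX a).anti (inter_subset_inter_right X (branches_mono hRa)))
  exact ⟨S, hS, hSR.trans hRT, hXS⟩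

end TreeFamily

lemma Set.subsingleton_range_inter_of_injective {α ι J : Type*} {A : ι → Set α}
    (hA : ∀ a b : ι, a ≠ b → A a ∩ A b = ∅) {g : J → ι} (hg : Injective g) {x : J → α}
    (hx : ∀ j, x j ∈ A (g j)) (a : ι) : (range x ∩ A a).Subsingleton := by
  have hga : ∀ j, x j ∈ A a → g j = a := fun j hj => by_contra fun hne =>
    (hA _ _ hne ▸ ⟨hx j, hj⟩ : x j ∈ (∅ : Set α))
  rintro _ ⟨⟨i, rfl⟩, hi⟩ _ ⟨⟨j, rfl⟩, hj⟩
  rw [hg ((hga i hi).trans (hga j hj).symm)]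

lemma lt_idealCof_of_forall_cofinal {I : Set (Set (ℕ → ℕ))} {c : Cardinal}
    (h : ∀ J ⊆ I, (∀ X ∈ I, ∃ Y ∈ J, X ⊆ Y) → c < #J) : c < idealCof I := by
  have hne : {c : Cardinal | ∃ J ⊆ I, #J = c ∧ ∀ X ∈ I, ∃ Y ∈ J, X ⊆ Y}.Nonempty :=
    ⟨_, I, subset_rfl, rfl, fun X hX => ⟨X, hX, subset_rfl⟩⟩
  obtain ⟨J, hJI, hJc, hcof⟩ := csInf_mem hne
  rw [idealCof, ← hJc]
  exact h J hJI hcof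

lemma continuum_lt_mk_of_cofinal_treeIdeal {𝕋 : Set (Set (List ℕ))}
    (htree : ∀ T ∈ 𝕋, IsSeqTree T)
    (hrestrict : ∀ T ∈ 𝕋, ∀ s ∈ T, {t ∈ T | s <+: t ∨ t <+: s} ∈ 𝕋)
    (hsplit : ∀ T ∈ 𝕋, ∃ P ∈ 𝕋, ∃ Q ∈ 𝕋, P ⊆ T ∧ Q ⊆ T ∧ branches P ∩ branches Q = ∅)
    (hdmap : DisjointMaxAntichainProp 𝕋) {J : Set (Set (ℕ → ℕ))} (hJ : J ⊆ treeIdeal 𝕋)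
    (hcof : ∀ X ∈ treeIdeal 𝕋, ∃ Y ∈ J, X ⊆ Y) : 𝔠 < #J := by
  obtain ⟨ι, Tfam, hι, hmem, hanti, hmax, hdisj⟩ := hdmap
  by_contra! hle
  obtain ⟨g⟩ : #J ≤ #{a | ¬ BranchlessBelow 𝕋 (Tfam a)} :=
    (mk_setOf_not_branchlessBelow htree hrestrict hι hanti).symm ▸ hle
  choose x hxT hxY using fun Y : J =>
    exists_mem_branches_not_mem_of_mem_treeIdeal (hJ Y.2) (hmem (g Y)) (g Y).2
  have hX : range x ∈ treeIdeal 𝕋 := mem_treeIdeal_of_subsingleton_inter hsplit hmax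
    (subsingleton_range_inter_of_injective hdisj (Subtype.val_injective.comp g.injective) hxT)
  obtain ⟨Y, hYJ, hXY⟩ := hcof _ hX
  exact hxY ⟨Y, hYJ⟩ (hXY ⟨_, rfl⟩)

theorem cof_treeIdeal_gt_continuum_of_disjointMaxAntichain_general (𝕋 : Set (Set (List ℕ)))
    (htree : ∀ T ∈ 𝕋, IsSeqTree T)
    (hrestrict : ∀ T ∈ 𝕋, ∀ s ∈ T, {t ∈ T | s <+: t ∨ t <+: s} ∈ 𝕋)
    (hsplit : ∀ T ∈ 𝕋, ∃ (ι : Type) (Tfam : ι → Set (List ℕ)),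
      Cardinal.mk ι = Cardinal.continuum ∧
      (∀ a : ι, Tfam a ∈ 𝕋 ∧ Tfam a ⊆ T) ∧
      (∀ a b : ι, a ≠ b → branches (Tfam a) ∩ branches (Tfam b) = ∅))
    (hdmap : DisjointMaxAntichainProp 𝕋) :
    Cardinal.continuum < idealCof (treeIdeal 𝕋) :=
  lt_idealCof_of_forall_cofinal fun _ hJ hcof =>
    continuum_lt_mk_of_cofinal_treeIdeal htree hrestrict
      (fun T hT => exists_disjoint_pair_of_split (hsplit T hT)) hdmap hJ hcof

/-- Let `𝕋` be a collection of trees on `ω^{<ω}` containing the full tree, closed under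
restrictions `T_s`, and such that every `T ∈ 𝕋` splits into continuum many members of `𝕋`
with pairwise disjoint branch sets.  If `𝕋` has the disjoint maximal antichain property,
then `cof(t⁰) > 𝔠`. -/
theorem cof_treeIdeal_gt_continuum_of_disjointMaxAntichain (𝕋 : Set (Set (List ℕ)))
    (htree : ∀ T ∈ 𝕋, IsSeqTree T)
    (huniv : (Set.univ : Set (List ℕ)) ∈ 𝕋)
    (hrestrict : ∀ T ∈ 𝕋, ∀ s ∈ T, {t ∈ T | s <+: t ∨ t <+: s} ∈ 𝕋)
    (hsplit : ∀ T ∈ 𝕋, ∃ (ι : Type) (Tfam : ι → Set (List ℕ)),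
      Cardinal.mk ι = Cardinal.continuum ∧
      (∀ a : ι, Tfam a ∈ 𝕋 ∧ Tfam a ⊆ T) ∧
      (∀ a b : ι, a ≠ b → branches (Tfam a) ∩ branches (Tfam b) = ∅))
    (hdmap : DisjointMaxAntichainProp 𝕋) :
    Cardinal.continuum < idealCof (treeIdeal 𝕋) :=
  cof_treeIdeal_gt_continuum_of_disjointMaxAntichain_general 𝕋 htree hrestrict hsplit hdmap
end

section
/- The cofinality of the cardinal cof(v⁰) is strictly greater than 𝔠, where v⁰ is the Silver ideal: cf(cof(v⁰)) > 2^{ℵ₀}. -/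
/-- The restriction `x↾n` of `x ∈ 2^ω` to its first `n` values, as a finite binary sequence. -/
def seqRestrict2 (x : ℕ → Bool) (n : ℕ) : List Bool := List.ofFn fun i : Fin n => x i

/-- A tree on `2`: a nonempty set of finite binary sequences closed under initial segments. -/
def IsSeqTree2 (T : Set (List Bool)) : Prop :=
  T.Nonempty ∧ ∀ s ∈ T, ∀ t : List Bool, t <+: s → t ∈ T

/-- `[T]`, the set of branches of a tree `T ⊆ 2^{<ω}`. -/
def branches2 (T : Set (List Bool)) : Set (ℕ → Bool) := {x | ∀ n : ℕ, seqRestrict2 x n ∈ T}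

/-- The tree of a partial function `p : ω → 2`: finite binary sequences agreeing with `p`
on the domain of `p`. -/
def silverTree (p : ℕ → Option Bool) : Set (List Bool) :=
  {s | ∀ (n : ℕ) (h : n < s.length) (b : Bool), p n = some b → s.get ⟨n, h⟩ = b}

/-- A Silver condition: a tree determined by a partial function `p : ω → 2` whose domain
has infinite complement. -/
def IsSilver (T : Set (List Bool)) : Prop :=
  ∃ p : ℕ → Option Bool, {n : ℕ | p n = none}.Infinite ∧ T = silverTree p

/-- The cofinality `cof(I)` of an ideal `I` on `2^ω`: the least cardinality of a family
`J ⊆ I` such that every member of `I` is contained in a member of `J`. -/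
noncomputable def idealCof2 (I : Set (Set (ℕ → Bool))) : Cardinal :=
  sInf {c : Cardinal | ∃ J ⊆ I, Cardinal.mk J = c ∧ ∀ X ∈ I, ∃ Y ∈ J, X ⊆ Y}

/-- The Silver ideal `v⁰`: all `X ⊆ 2^ω` such that every Silver condition has a Silver
subcondition whose branch set avoids `X`. -/
def silverIdeal : Set (Set (ℕ → Bool)) :=
  {X | ∀ T : Set (List Bool), IsSilver T →
    ∃ S : Set (List Bool), IsSilver S ∧ S ⊆ T ∧ X ∩ branches2 S = ∅}

/-!
Conditions are coded by their partial functions `p : ℕ → Option Bool`. For `w : 2^ω` let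
`embed w` write `w` twice on the even coordinates (at `4k` and `4k+2`) and its argument on the
odd ones. Pulling back along `embed w` preserves `v⁰`, so fewer than `cof(v⁰)` null sets, pulled
back, are not cofinal and some null `Z_w` escapes all of them. For `𝔠` many distinct `w`, the
union of the images `embed w '' Z_w` is still null: a condition either leaves an even coordinate
free, and can then be extended to separate coordinates `4k` and `4k+2`, avoiding all images, or
fixes all even coordinates and meets only one image. Hence no union of `𝔠` families of size
`< cof(v⁰)` is cofinal, which gives `𝔠 < cof(v⁰)` and then `𝔠 < cf(cof(v⁰))`.
-/

open Set Cardinal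

theorem Cardinal.exists_iUnion_eq_univ_mk_lt {α : Type*} (hα : ℵ₀ ≤ #α) :
    ∃ (ι : Type _) (P : ι → Set α),
      #ι = (#α).ord.cof ∧ (∀ i, #(P i) < #α) ∧ ⋃ i, P i = Set.univ := by
  have := Cardinal.noMaxOrder hα
  obtain ⟨e⟩ := Cardinal.eq.mp (mk_ord_toType #α).symm
  obtain ⟨S, hS, hSmk⟩ := Order.exists_cof_eq (#α).ord.ToType
  refine ⟨S, fun b => e ⁻¹' Iio b.1, by rw [hSmk, Ordinal.cof_toType], fun b => ?_, ?_⟩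
  · rw [mk_preimage_equiv]
    simpa using mk_Iio_lt b.1 (by rw [mk_ord_toType, Ordinal.type_toType])
  · refine eq_univ_of_forall fun a => ?_
    obtain ⟨a', ha'⟩ := exists_gt (e a)
    obtain ⟨b, hb, hab⟩ := hS a'
    exact mem_iUnion.2 ⟨⟨b, hb⟩, ha'.trans_le hab⟩

section IdealCofinality

variable {I : Set (Set (ℕ → Bool))}

theorem idealCof2_le_mk {J : Set (Set (ℕ → Bool))} (hJ : J ⊆ I)
    (hcof : ∀ X ∈ I, ∃ Y ∈ J, X ⊆ Y) : idealCof2 I ≤ #J :=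
  csInf_le' ⟨J, hJ, rfl, hcof⟩

theorem exists_not_subset_of_mk_lt_idealCof2 {J : Set (Set (ℕ → Bool))} (hJ : J ⊆ I)
    (h : #J < idealCof2 I) : ∃ X ∈ I, ∀ Y ∈ J, ¬ X ⊆ Y := by
  by_contra! hcof
  exact (idealCof2_le_mk hJ hcof).not_gt h

theorem exists_mk_eq_idealCof2 (I : Set (Set (ℕ → Bool))) :
    ∃ J ⊆ I, #J = idealCof2 I ∧ ∀ X ∈ I, ∃ Y ∈ J, X ⊆ Y := by
  have hne : {c | ∃ J ⊆ I, #J = c ∧ ∀ X ∈ I, ∃ Y ∈ J, X ⊆ Y}.Nonempty :=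
    ⟨#I, I, subset_rfl, rfl, fun X hX => ⟨X, hX, subset_rfl⟩⟩
  exact csInf_mem hne

theorem one_lt_idealCof2 (hne : I.Nonempty) (h : ∀ Y ∈ I, ∃ X ∈ I, ¬ X ⊆ Y) :
    1 < idealCof2 I := by
  obtain ⟨J, hJI, hJ, hcof⟩ := exists_mk_eq_idealCof2 I
  by_contra! hle
  rw [← hJ, mk_le_one_iff_set_subsingleton] at hle
  obtain ⟨Y₀, hY₀, -⟩ := hcof _ hne.some_mem
  obtain ⟨X, hX, hXY₀⟩ := h Y₀ (hJI hY₀)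
  obtain ⟨Y, hY, hXY⟩ := hcof X hX
  exact hXY₀ (hle hY hY₀ ▸ hXY)

theorem lt_cof_ord_idealCof2 {μ : Cardinal} (hμ : ℵ₀ ≤ μ) (hI : 1 < idealCof2 I)
    (H : ∀ (ι : Type) (Js : ι → Set (Set (ℕ → Bool))), #ι ≤ μ → (∀ i, Js i ⊆ I) →
      (∀ i, #(Js i) < idealCof2 I) → ∃ X ∈ I, ∀ i, ∀ Y ∈ Js i, ¬ X ⊆ Y) :
    μ < (idealCof2 I).ord.cof := by
  obtain ⟨J, hJI, hJ, hcof⟩ := exists_mk_eq_idealCof2 I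
  have uncovered : ∀ (ι : Type) (P : ι → Set J), #ι ≤ μ → (∀ i, #(P i) < idealCof2 I) →
      ∃ Y : J, ∀ i, Y ∉ P i := by
    intro ι P hι hP
    obtain ⟨X, hX, hXY⟩ := H ι (fun i => Subtype.val '' P i) hι
      (fun i => (image_subset_range _ _).trans (by simpa using hJI))
      (fun i => mk_image_le.trans_lt (hP i))
    obtain ⟨Y, hY, hXY'⟩ := hcof X hX
    exact ⟨⟨Y, hY⟩, fun i hi => hXY i Y (mem_image_of_mem _ hi) hXY'⟩
  have hμκ : μ < idealCof2 I := by
    by_contra! hle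
    obtain ⟨Y, hY⟩ := uncovered J (fun Y => {Y}) (hJ ▸ hle) (fun _ => by rwa [mk_singleton])
    exact hY Y rfl
  rw [← hJ] at hμκ ⊢
  by_contra! hle
  obtain ⟨ι, P, hι, hP, hcover⟩ := exists_iUnion_eq_univ_mk_lt (hμ.trans hμκ.le)
  obtain ⟨Y, hY⟩ := uncovered ι P (hι ▸ hle) (hJ ▸ hP)
  exact (mem_iUnion.not.2 (not_exists.2 hY)) (hcover ▸ mem_univ Y)

end IdealCofinality

namespace Silver

variable {p q u : ℕ → Option Bool} {m n : ℕ}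

def Coinf (p : ℕ → Option Bool) : Prop := {n | p n = none}.Infinite

def Extends (u p : ℕ → Option Bool) : Prop := ∀ n b, p n = some b → u n = some b

def body (p : ℕ → Option Bool) : Set (ℕ → Bool) := {x | ∀ n b, p n = some b → x n = b}

theorem Extends.refl (p : ℕ → Option Bool) : Extends p p :=
  fun _ _ h => h

theorem Extends.trans (huq : Extends u q) (hqp : Extends q p) : Extends u p :=
  fun n b h => huq n b (hqp n b h)

theorem seqRestrict2_get (x : ℕ → Bool) (k n : ℕ) (h : n < (seqRestrict2 x k).length) :
    (seqRestrict2 x k).get ⟨n, h⟩ = x n := by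
  simp [seqRestrict2]

theorem branches2_silverTree (p : ℕ → Option Bool) : branches2 (silverTree p) = body p := by
  ext x
  refine ⟨fun hx n b hb => ?_, fun hx k n hn b hb => ?_⟩
  · have := hx (n + 1) n (by simp [seqRestrict2]) b hb
    rwa [seqRestrict2_get] at this
  · simpa only [seqRestrict2_get] using hx n b hb

theorem silverTree_mono (h : Extends q p) : silverTree q ⊆ silverTree p :=
  fun _ hs n hn b hb => hs n hn b (h n b hb)

theorem body_mono (h : Extends q p) : body q ⊆ body p :=
  fun _ hx n b hb => hx n b (h n b hb)

theorem getD_mem_body (p : ℕ → Option Bool) (b : Bool) : (fun n => (p n).getD b) ∈ body p := by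
  intro n c hc
  simp [hc]

theorem extends_of_body_subset (h : body q ⊆ body p) : Extends q p := by
  intro n b hb
  by_contra hq
  have hx := h (getD_mem_body q (!b)) n b hb
  cases hqn : q n <;> simp_all

theorem mem_silverIdeal_iff {X : Set (ℕ → Bool)} :
    X ∈ silverIdeal ↔ ∀ q, Coinf q → ∃ u, Coinf u ∧ Extends u q ∧ Disjoint X (body u) := by
  simp only [silverIdeal, IsSilver, ← disjoint_iff_inter_eq_empty]
  constructor
  · intro hX q hq
    obtain ⟨_, ⟨u, hu, rfl⟩, hsub, hdisj⟩ := hX _ ⟨q, hq, rfl⟩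
    rw [branches2_silverTree] at hdisj
    refine ⟨u, hu, extends_of_body_subset ?_, hdisj⟩
    rw [← branches2_silverTree, ← branches2_silverTree]
    exact fun x hx k => hsub (hx k)
  · rintro h _ ⟨q, hq, rfl⟩
    obtain ⟨u, hu, hqu, hdisj⟩ := h q hq
    exact ⟨_, ⟨u, hu, rfl⟩, silverTree_mono hqu, by rwa [branches2_silverTree]⟩

def fix (p : ℕ → Option Bool) (n : ℕ) (b : Bool) : ℕ → Option Bool :=
  Function.update p n (some ((p n).getD b))

theorem extends_fix (p : ℕ → Option Bool) (n : ℕ) (b : Bool) : Extends (fix p n b) p := by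
  intro k c hc
  rcases eq_or_ne k n with rfl | hkn
  · simp [fix, hc]
  · rwa [fix, Function.update_of_ne hkn]

theorem Coinf.fix (hp : Coinf p) (n : ℕ) (b : Bool) : Coinf (fix p n b) := by
  refine (hp.sdiff (finite_singleton n)).mono ?_
  rintro k ⟨hk, hkn : k ≠ n⟩
  simpa [Silver.fix, Function.update_of_ne hkn] using hk

theorem apply_eq_of_mem_body_fix {x : ℕ → Bool} {b : Bool} (hx : x ∈ body (fix p n b)) :
    x n = (p n).getD b :=
  hx n _ (by simp [fix])

theorem exists_extends_forall_ne (hp : Coinf p) (hmn : m ≠ n)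
    (h : ¬ ∃ b, p m = some b ∧ p n = some b) :
    ∃ u, Coinf u ∧ Extends u p ∧ ∀ x ∈ body u, x m ≠ x n := by
  -- first fix `m` (against `p n` if `p m` is free), then fix `n` against the value at `m`
  set a := (p m).getD (!(p n).getD true)
  refine ⟨fix (fix p m (!(p n).getD true)) n (!a), (hp.fix _ _).fix _ _,
    (extends_fix _ _ _).trans (extends_fix _ _ _), fun x hx => ?_⟩
  rw [apply_eq_of_mem_body_fix (body_mono (extends_fix _ _ _) hx), apply_eq_of_mem_body_fix hx,
    fix, Function.update_of_ne hmn.symm]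
  cases hpn : p n <;> cases hpm : p m <;> simp_all [a, eq_comm]

theorem singleton_mem_silverIdeal (x : ℕ → Bool) : {x} ∈ silverIdeal := by
  refine mem_silverIdeal_iff.2 fun q hq => ?_
  obtain ⟨n, hn : q n = none⟩ := hq.nonempty
  refine ⟨fix q n (!x n), hq.fix _ _, extends_fix _ _ _, disjoint_singleton_left.2 fun hx => ?_⟩
  simpa [hn] using apply_eq_of_mem_body_fix hx

theorem exists_not_mem_of_mem_silverIdeal {Y : Set (ℕ → Bool)} (hY : Y ∈ silverIdeal) :
    ∃ x, x ∉ Y := by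
  have hcoinf : Coinf fun _ => none := by simp [Coinf, infinite_univ]
  obtain ⟨u, -, -, hdisj⟩ := mem_silverIdeal_iff.1 hY _ hcoinf
  exact ⟨_, disjoint_right.1 hdisj (getD_mem_body u false)⟩

theorem one_lt_idealCof2_silverIdeal : 1 < idealCof2 silverIdeal := by
  refine one_lt_idealCof2 ⟨_, singleton_mem_silverIdeal fun _ => false⟩ fun Y hY => ?_
  obtain ⟨x, hx⟩ := exists_not_mem_of_mem_silverIdeal hY
  exact ⟨{x}, singleton_mem_silverIdeal x, singleton_subset_iff.not.2 hx⟩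

def embed (w x : ℕ → Bool) : ℕ → Bool := fun n => if n % 2 = 0 then w (n / 4) else x (n / 2)

def liftCond (v : ℕ → Bool) (r : ℕ → Option Bool) : ℕ → Option Bool :=
  fun n => if n % 2 = 0 then some (v (n / 4)) else r (n / 2)

def dropCond (u : ℕ → Option Bool) : ℕ → Option Bool := fun k => u (2 * k + 1)

variable {v w x : ℕ → Bool} {r s : ℕ → Option Bool}

theorem embed_mem_body_liftCond : embed w x ∈ body (liftCond v r) ↔ w = v ∧ x ∈ body r := by
  constructor
  · intro h
    refine ⟨funext fun k => ?_, fun k b hb => ?_⟩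
    · have h4 : 4 * k % 2 = 0 := by omega
      simpa [embed, h4] using h (4 * k) (v k) (by simp [liftCond, h4])
    · simpa [embed, Nat.mul_add_mod, Nat.mul_add_div] using
        h (2 * k + 1) b (by simpa [liftCond, Nat.mul_add_mod, Nat.mul_add_div] using hb)
  · rintro ⟨rfl, hx⟩ n b hb
    unfold liftCond at hb
    unfold embed
    split_ifs at hb ⊢
    · exact Option.some_inj.1 hb
    · exact hx _ _ hb

theorem coinf_liftCond_iff : Coinf (liftCond v r) ↔ Coinf r := by
  have : {n | liftCond v r n = none} = (fun k => 2 * k + 1) '' {k | r k = none} := by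
    ext n
    simp only [liftCond, mem_image]
    constructor
    · intro (h : ite _ _ _ = none)
      split_ifs at h
      exact ⟨n / 2, h, by omega⟩
    · rintro ⟨k, hk, rfl⟩
      simpa [Nat.mul_add_mod, Nat.mul_add_div] using hk
  rw [Coinf, Coinf, this, infinite_image_iff (fun a _ b _ h => by simpa using h)]

theorem extends_liftCond_iff : Extends (liftCond v s) (liftCond v r) ↔ Extends s r := by
  constructor
  · intro h k b hb
    simpa [liftCond, Nat.mul_add_mod, Nat.mul_add_div] using
      h (2 * k + 1) b (by simpa [liftCond, Nat.mul_add_mod, Nat.mul_add_div] using hb)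
  · intro h n b hb
    unfold liftCond at hb ⊢
    split_ifs at hb ⊢
    · exact hb
    · exact h _ _ hb

theorem liftCond_dropCond (h : Extends u (liftCond v r)) : liftCond v (dropCond u) = u := by
  funext n
  unfold liftCond dropCond
  split_ifs with hn
  · exact (h n _ (if_pos hn)).symm
  · congr 1
    omega

theorem preimage_embed_mem_silverIdeal {Y : Set (ℕ → Bool)} (hY : Y ∈ silverIdeal)
    (w : ℕ → Bool) : embed w ⁻¹' Y ∈ silverIdeal := by
  refine mem_silverIdeal_iff.2 fun r hr => ?_
  obtain ⟨u, hu, hru, hdisj⟩ := mem_silverIdeal_iff.1 hY _ (coinf_liftCond_iff.2 hr)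
  have hu' := liftCond_dropCond hru
  rw [← hu'] at hu hru hdisj
  refine ⟨dropCond u, coinf_liftCond_iff.1 hu, extends_liftCond_iff.1 hru, ?_⟩
  exact disjoint_right.2 fun x hx hxY =>
    disjoint_left.1 hdisj hxY (embed_mem_body_liftCond.2 ⟨rfl, hx⟩)

theorem exists_extends_forall_ne_or_eq_liftCond (hq : Coinf q) :
    ∃ u, Coinf u ∧ Extends u q ∧
      ((∀ x ∈ body u, ∃ k, x (4 * k) ≠ x (4 * k + 2)) ∨ ∃ v r, u = liftCond v r) := by
  by_cases h : ∀ k, ∃ b, q (4 * k) = some b ∧ q (4 * k + 2) = some b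
  · choose v hv using h
    refine ⟨q, hq, .refl q,
      Or.inr ⟨v, dropCond q, (liftCond_dropCond (r := fun _ => none) ?_).symm⟩⟩
    intro n b hb
    unfold liftCond at hb
    split_ifs at hb with hn
    obtain h | h : n = 4 * (n / 4) ∨ n = 4 * (n / 4) + 2 := by omega
    · rw [h, (hv _).1, ← hb]
    · rw [h, (hv _).2, ← hb]
  · obtain ⟨k, hk⟩ := not_forall.1 h
    obtain ⟨u, hu, hqu, hne⟩ := exists_extends_forall_ne hq (m := 4 * k) (n := 4 * k + 2)
      (by omega) hk
    exact ⟨u, hu, hqu, Or.inl fun x hx => ⟨k, hne x hx⟩⟩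

theorem embed_four_mul (w x : ℕ → Bool) (k : ℕ) : embed w x (4 * k) = w k := by
  simp [embed, show 4 * k % 2 = 0 by omega]

theorem embed_four_mul_add_two (w x : ℕ → Bool) (k : ℕ) : embed w x (4 * k + 2) = w k := by
  simp [embed, show (4 * k + 2) % 2 = 0 by omega, show (4 * k + 2) / 4 = k by omega]

theorem iUnion_image_embed_mem_silverIdeal {ι : Type*} {w : ι → ℕ → Bool}
    (hw : Function.Injective w) {Z : ι → Set (ℕ → Bool)} (hZ : ∀ i, Z i ∈ silverIdeal) :
    (⋃ i, embed (w i) '' Z i) ∈ silverIdeal := by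
  refine mem_silverIdeal_iff.2 fun q hq => ?_
  obtain ⟨u, hu, hqu, hsep | ⟨v, r, rfl⟩⟩ := exists_extends_forall_ne_or_eq_liftCond hq
  · refine ⟨u, hu, hqu, disjoint_iUnion_left.2 fun i => disjoint_left.2 ?_⟩
    rintro _ ⟨x, -, rfl⟩ hx
    obtain ⟨k, hk⟩ := hsep _ hx
    exact hk (by rw [embed_four_mul, embed_four_mul_add_two])
  have hr := coinf_liftCond_iff.1 hu
  obtain ⟨s, hs, hrs, hdisj⟩ : ∃ s, Coinf s ∧ Extends s r ∧
      ∀ i, w i = v → Disjoint (Z i) (body s) := by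
    by_cases hv : ∃ i, w i = v
    · obtain ⟨i, rfl⟩ := hv
      obtain ⟨s, hs, hrs, hdisj⟩ := mem_silverIdeal_iff.1 (hZ i) r hr
      exact ⟨s, hs, hrs, fun j hj => hw hj ▸ hdisj⟩
    · exact ⟨r, hr, .refl r, fun i hi => (hv ⟨i, hi⟩).elim⟩
  refine ⟨liftCond v s, coinf_liftCond_iff.2 hs, (extends_liftCond_iff.2 hrs).trans hqu,
    disjoint_iUnion_left.2 fun i => disjoint_left.2 ?_⟩
  rintro _ ⟨x, hx, rfl⟩ hxs
  obtain ⟨hi, hxs⟩ := embed_mem_body_liftCond.1 hxs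
  exact disjoint_left.1 (hdisj i hi) hx hxs

theorem exists_mem_silverIdeal_forall_not_subset {ι : Type}
    (Js : ι → Set (Set (ℕ → Bool))) (hι : #ι ≤ 𝔠) (hJs : ∀ i, Js i ⊆ silverIdeal)
    (hsmall : ∀ i, #(Js i) < idealCof2 silverIdeal) :
    ∃ X ∈ silverIdeal, ∀ i, ∀ Y ∈ Js i, ¬ X ⊆ Y := by
  obtain ⟨ψ⟩ : Nonempty (ι ↪ (ℕ → Bool)) := by
    rwa [← le_def, mk_arrow, mk_bool, mk_nat, lift_id, lift_aleph0, two_power_aleph0]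
  have hZ : ∀ i, ∃ Z ∈ silverIdeal, ∀ Y ∈ Js i, ¬ Z ⊆ embed (ψ i) ⁻¹' Y := by
    intro i
    obtain ⟨Z, hZ, hZY⟩ := exists_not_subset_of_mk_lt_idealCof2
      (J := (embed (ψ i) ⁻¹' ·) '' Js i)
      (forall_mem_image.2 fun Y hY => preimage_embed_mem_silverIdeal (hJs i hY) (ψ i))
      (mk_image_le.trans_lt (hsmall i))
    exact ⟨Z, hZ, fun Y hY => hZY _ (mem_image_of_mem _ hY)⟩
  choose Z hZ hZY using hZ
  refine ⟨_, iUnion_image_embed_mem_silverIdeal ψ.injective hZ, fun i Y hY hXY => ?_⟩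
  exact hZY i Y hY (image_subset_iff.1 ((subset_iUnion (fun i => embed (ψ i) '' Z i) i).trans hXY))

end Silver

/-- `cf(cof(v⁰)) > 𝔠` for the Silver ideal `v⁰`. -/
theorem cof_silverIdeal : Cardinal.continuum < (idealCof2 silverIdeal).ord.cof :=
  lt_cof_ord_idealCof2 aleph0_le_continuum Silver.one_lt_idealCof2_silverIdeal
    fun _ => Silver.exists_mem_silverIdeal_forall_not_subset
end
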